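/- In the universal bivariant theory M^C_S, the bivariant product defined on generators by [V →h X] • [W →k Y] := [V' → X] (where V' = V ×_X (X ×_Y W) via base change) is associative. -/

import Mathlib

universe u

/-- The fiber product of two maps of types. -/
def Pb {X Y S : Type u} (f : X → S) (g : Y → S) : Type u :=
  {p : X × Y // f p.1 = g p.2}

def Pb.fst {X Y S : Type u} (f : X → S) (g : Y → S) : Pb f g → X := fun p => p.1.1

def Pb.snd {X Y S : Type u} (f : X → S) (g : Y → S) : Pb f g → Y := fun p => p.1.2

/-- A generating cycle `[V →h X]` of the universal bivariant theory
`M^C_S(X →f Y)`: a confined morphism `h : V → X` such that `f ∘ h` is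
specialized. -/
structure Cyc (Conf : ∀ {A B : Type u}, (A → B) → Prop)
    (Spec : ∀ {A B : Type u}, (A → B) → Prop)
    {X Y : Type u} (f : X → Y) : Type (u + 1) where
  V : Type u
  h : V → X
  conf : Conf h
  spec : Spec (f ∘ h)

/-- Isomorphism of cycles over `X`. -/
def isoRel (Conf Spec : ∀ {A B : Type u}, (A → B) → Prop)
    {X Y : Type u} (f : X → Y) (c₁ c₂ : Cyc Conf Spec f) : Prop :=
  ∃ e : c₁.V ≃ c₂.V, c₂.h ∘ e = c₁.h

/-- The universal bivariant theory `M^C_S(X →f Y)`: the free abelian group on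
isomorphism classes of cycles. -/
def UBT (Conf Spec : ∀ {A B : Type u}, (A → B) → Prop)
    {X Y : Type u} (f : X → Y) : Type (u + 1) :=
  FreeAbelianGroup (Quot (isoRel Conf Spec f))

/-- The bivariant product on generators: `[V →h X] • [W →k Y] := [V' →h∘k'' X]`,
where `V' = V ×_X (X ×_Y W)`.  (The proofs `hc`, `hs` that the resulting morphism
is again confined with specialized composite follow from the closure of the classes
`C` and `S` under composition and base change; they are proof-irrelevant data.) -/
def prodCyc {Conf Spec : ∀ {A B : Type u}, (A → B) → Prop}
    {X Y Z : Type u} {f : X → Y} {g : Y → Z}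
    (c₁ : Cyc Conf Spec f) (c₂ : Cyc Conf Spec g)
    (hc : Conf fun p : Pb c₁.h (Pb.fst f c₂.h) => c₁.h p.1.1)
    (hs : Spec ((g ∘ f) ∘ fun p : Pb c₁.h (Pb.fst f c₂.h) => c₁.h p.1.1)) :
    Cyc Conf Spec (g ∘ f) :=
  ⟨Pb c₁.h (Pb.fst f c₂.h), fun p => c₁.h p.1.1, hc, hs⟩

/-!
Both iterated products are cycles whose source is an iterated fiber product of types, and each of
these is canonically equivalent to the triple fiber product `V₁ ×_Y V₂ ×_Z V₃`: the intermediate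
coordinates in `X` (and `Y`) are redundant, being determined by the point of `V₁` (resp. `V₂`).
Both equivalences commute with the projection to `V₁`, hence with the structure maps to `X`, so the
two products are isomorphic cycles.
-/

namespace Pb

variable {V₁ V₂ V₃ X Y Z : Type u}

def Triple (a : V₁ → Y) (b : V₂ → Y) (g : Y → Z) (c : V₃ → Z) : Type u :=
  {t : V₁ × V₂ × V₃ // a t.1 = b t.2.1 ∧ g (b t.2.1) = c t.2.2}

variable (h₁ : V₁ → X) (f : X → Y) (h₂ : V₂ → Y) (g : Y → Z) (h₃ : V₃ → Z)

def leftNestedEquivTriple :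
    Pb (fun p : Pb h₁ (Pb.fst f h₂) => h₁ p.1.1) (Pb.fst (g ∘ f) h₃) ≃
      Triple (f ∘ h₁) h₂ g h₃ where
  toFun p := ⟨(p.1.1.1.1, p.1.1.1.2.1.2, p.1.2.1.2), by
    obtain ⟨⟨⟨⟨v, ⟨⟨x, w⟩, hxw⟩⟩, hvx⟩, ⟨⟨x', u⟩, hx'u⟩⟩, hp⟩ := p
    change h₁ v = x at hvx
    change h₁ v = x' at hp
    subst hvx hp
    exact ⟨hxw, (congrArg g hxw).symm.trans hx'u⟩⟩
  invFun t := ⟨(⟨(t.1.1, ⟨(h₁ t.1.1, t.1.2.1), t.2.1⟩), rfl⟩,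
    ⟨(h₁ t.1.1, t.1.2.2), (congrArg g t.2.1).trans t.2.2⟩), rfl⟩
  left_inv := by
    rintro ⟨⟨⟨⟨v, ⟨⟨x, w⟩, hxw⟩⟩, hvx⟩, ⟨⟨x', u⟩, hx'u⟩⟩, hp⟩
    change h₁ v = x at hvx
    change h₁ v = x' at hp
    subst hvx hp
    rfl
  right_inv _ := rfl

def rightNestedEquivTriple :
    Pb h₁ (Pb.fst f fun p : Pb h₂ (Pb.fst g h₃) => h₂ p.1.1) ≃ Triple (f ∘ h₁) h₂ g h₃ where
  toFun p := ⟨(p.1.1, p.1.2.1.2.1.1, p.1.2.1.2.1.2.1.2), by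
    obtain ⟨⟨v, ⟨⟨x, ⟨⟨w, ⟨⟨y, u⟩, hyu⟩⟩, hwy⟩⟩, hxw⟩⟩, hvx⟩ := p
    change h₁ v = x at hvx
    change h₂ w = y at hwy
    subst hvx hwy
    exact ⟨hxw, hyu⟩⟩
  invFun t := ⟨(t.1.1, ⟨(h₁ t.1.1, ⟨(t.1.2.1, ⟨(h₂ t.1.2.1, t.1.2.2), t.2.2⟩), rfl⟩), t.2.1⟩), rfl⟩
  left_inv := by
    rintro ⟨⟨v, ⟨⟨x, ⟨⟨w, ⟨⟨y, u⟩, hyu⟩⟩, hwy⟩⟩, hxw⟩⟩, hvx⟩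
    change h₁ v = x at hvx
    change h₂ w = y at hwy
    subst hvx hwy
    rfl
  right_inv _ := rfl

end Pb

theorem prodCyc_assoc {Conf Spec : ∀ {A B : Type u}, (A → B) → Prop}
    {X Y Z W : Type u} (f : X → Y) (g : Y → Z) (k : Z → W)
    (c₁ : Cyc Conf Spec f) (c₂ : Cyc Conf Spec g) (c₃ : Cyc Conf Spec k)
    (hc₁) (hs₁) (hc₂) (hs₂) (hc₃) (hs₃) (hc₄) (hs₄) :
    (FreeAbelianGroup.of
        (Quot.mk (isoRel Conf Spec (k ∘ (g ∘ f)))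
          (prodCyc (f := g ∘ f) (g := k)
            (prodCyc (f := f) (g := g) c₁ c₂ hc₁ hs₁) c₃ hc₂ hs₂))
      : UBT Conf Spec (k ∘ (g ∘ f)))
      = FreeAbelianGroup.of
          (Quot.mk (isoRel Conf Spec (k ∘ (g ∘ f)))
            (prodCyc (f := f) (g := k ∘ g) c₁
              (prodCyc (f := g) (g := k) c₂ c₃ hc₃ hs₃) hc₄ hs₄)) :=
  congrArg FreeAbelianGroup.of <| Quot.sound
    ⟨(Pb.leftNestedEquivTriple c₁.h f c₂.h g c₃.h).trans
      (Pb.rightNestedEquivTriple c₁.h f c₂.h g c₃.h).symm, rfl⟩
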